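/- Let p ≥ 2, α₂, β > 0, ψ₂, ψ₃ ∈ L²(ℝ^n) with ψ₂ ≥ 0, and let f : ℝ^n × ℝ → ℝ be C¹ with |f(x,s)| ≤ α₂|s|^{p−1} + ψ₂(x), ∂f/∂s(x,s) ≤ β, and |∇_x f(x,s)| ≤ ψ₃(x) for all x ∈ ℝ^n, s ∈ ℝ. Then there exists c > 0, depending only on α₂, β, p, ‖ψ₂‖_{L²} and ‖ψ₃‖_{L²}, such that for every u ∈ C²(ℝ^n) with compact support and every ζ ∈ C²(ℝ^n) with Δζ ∈ L²(ℝ^n) ∩ L^p(ℝ^n): −∫_{ℝ^n} f(x,u(x))·(Δu(x) − Δζ(x)) dx ≤ c(‖∇u‖_{L²}² + ‖u‖_{L^p}^p) + c(‖Δζ‖_{L²}² + ‖Δζ‖_{L^p}^p + 1). -/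

import Mathlib

/-! Integrating by parts, `-∫ f(x,u) Δu = ∫ ⟪∇ₓf(x,u) + ∂ₛf(x,u) ∇u, ∇u⟫`, and the bounds
`|∇ₓf| ≤ ψ₃`, `∂ₛf ≤ β` with Young's inequality give `‖ψ₃‖₂²/2 + (1/2 + β)‖∇u‖₂²`.
The term `∫ f(x,u) Δζ` needs no derivatives: the growth bound together with
`a^(p-1) b ≤ a^p + b^p` and `ψ₂ |Δζ| ≤ ψ₂²/2 + |Δζ|²/2` dominates it pointwise by an integrable
function. -/

open MeasureTheory Set
noncomputable section

/-- The Laplacian of a function on `ℝ^n`, as the sum of its second partial derivatives. -/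
def lap {n : ℕ} (u : EuclideanSpace ℝ (Fin n) → ℝ) (x : EuclideanSpace ℝ (Fin n)) : ℝ :=
  ∑ i : Fin n, fderiv ℝ (fun y => fderiv ℝ u y (EuclideanSpace.single i 1)) x
    (EuclideanSpace.single i 1)

open scoped InnerProductSpace

theorem Real.rpow_sub_one_mul_le_rpow_add_rpow {p a b : ℝ} (hp : 1 ≤ p) (ha : 0 ≤ a)
    (hb : 0 ≤ b) : a ^ (p - 1) * b ≤ a ^ p + b ^ p := by
  have hm : 0 ≤ max a b := le_max_of_le_left ha
  calc a ^ (p - 1) * b ≤ max a b ^ (p - 1) * max a b :=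
        mul_le_mul (rpow_le_rpow ha (le_max_left a b) (by linarith)) (le_max_right a b) hb
          (rpow_nonneg hm _)
    _ = max a b ^ p := by
        rw [← rpow_add_one' hm (by linarith), sub_add_cancel]
    _ ≤ a ^ p + b ^ p := by
        rcases max_choice a b with h | h <;> rw [h]
        · linarith [rpow_nonneg hb p]
        · linarith [rpow_nonneg ha p]

theorem abs_mul_le_of_abs_le_rpow_add {p α a b s ψ : ℝ} (hp : 1 ≤ p) (hα : 0 ≤ α)
    (ha : |a| ≤ α * |s| ^ (p - 1) + ψ) :
    |a * b| ≤ α * (|s| ^ p + |b| ^ p) + (ψ ^ 2 / 2 + b ^ 2 / 2) := by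
  have young := Real.rpow_sub_one_mul_le_rpow_add_rpow hp (abs_nonneg s) (abs_nonneg b)
  have amgm : ψ * |b| ≤ ψ ^ 2 / 2 + b ^ 2 / 2 := by
    nlinarith [sq_nonneg (ψ - |b|), sq_abs b]
  rw [abs_mul]
  nlinarith [mul_le_mul_of_nonneg_right ha (abs_nonneg b), mul_le_mul_of_nonneg_left young hα]

theorem real_inner_add_smul_le {H : Type*} [NormedAddCommGroup H] [InnerProductSpace ℝ H]
    {a g : H} {d β ψ : ℝ} (ha : ‖a‖ ≤ ψ) (hd : d ≤ β) :
    ⟪a + d • g, g⟫_ℝ ≤ ψ ^ 2 / 2 + (1 / 2 + β) * ‖g‖ ^ 2 := by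
  rw [inner_add_left, real_inner_smul_left, real_inner_self_eq_norm_sq]
  have hψ : ⟪a, g⟫_ℝ ≤ ψ * ‖g‖ :=
    (real_inner_le_norm a g).trans (mul_le_mul_of_nonneg_right ha (norm_nonneg g))
  nlinarith [sq_nonneg (ψ - ‖g‖), mul_le_mul_of_nonneg_right hd (sq_nonneg ‖g‖)]

section ChainRule

variable {E : Type*} [NormedAddCommGroup E] [NormedSpace ℝ E] {f : E → ℝ → ℝ} {u : E → ℝ} {x : E}

theorem fderiv_comp_graph (hf : DifferentiableAt ℝ (fun xs : E × ℝ => f xs.1 xs.2) (x, u x))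
    (hu : DifferentiableAt ℝ u x) :
    fderiv ℝ (fun y => f y (u y)) x
      = fderiv ℝ (fun y => f y (u x)) x + deriv (fun r => f x r) (u x) • fderiv ℝ u x := by
  set D := fderiv ℝ (fun xs : E × ℝ => f xs.1 xs.2) (x, u x)
  have hD := hf.hasFDerivAt
  have hgraph : HasFDerivAt (fun y => f y (u y))
      (D.comp ((ContinuousLinearMap.id ℝ E).prod (fderiv ℝ u x))) x := by
    exact hD.comp x ((hasFDerivAt_id x).prodMk hu.hasFDerivAt)
  have hfx : HasFDerivAt (fun y => f y (u x))
      (D.comp ((ContinuousLinearMap.id ℝ E).prod 0)) x := by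
    exact hD.comp x ((hasFDerivAt_id x).prodMk (hasFDerivAt_const (𝕜 := ℝ) (u x) x))
  have hfs : HasDerivAt (fun r => f x r) (D (0, 1)) (u x) :=
    hD.comp_hasDerivAt (u x) ((hasDerivAt_const _ x).prodMk (hasDerivAt_id _))
  rw [hgraph.fderiv, hfx.fderiv, hfs.deriv]
  ext v
  have hsplit : (v, fderiv ℝ u x v) = (v, 0) + fderiv ℝ u x v • ((0 : E), (1 : ℝ)) := by simp
  simp only [add_apply, ContinuousLinearMap.comp_apply, ContinuousLinearMap.prod_apply,
    ContinuousLinearMap.id_apply, zero_apply, smul_apply]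
  rw [hsplit, map_add, map_smul, smul_eq_mul, smul_eq_mul, mul_comm]

theorem gradient_comp_graph {H : Type*} [NormedAddCommGroup H] [InnerProductSpace ℝ H]
    [CompleteSpace H] {f : H → ℝ → ℝ} {u : H → ℝ} {x : H}
    (hf : DifferentiableAt ℝ (fun xs : H × ℝ => f xs.1 xs.2) (x, u x))
    (hu : DifferentiableAt ℝ u x) :
    gradient (fun y => f y (u y)) x
      = gradient (fun y => f y (u x)) x + deriv (fun r => f x r) (u x) • gradient u x := by
  simp only [gradient, fderiv_comp_graph hf hu, map_add, map_smul]

end ChainRule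

section Gradient

variable {H : Type*} [NormedAddCommGroup H] [InnerProductSpace ℝ H] [CompleteSpace H] {u : H → ℝ}

theorem ContDiff.continuous_gradient (hu : ContDiff ℝ 1 u) : Continuous (gradient u) :=
  (InnerProductSpace.toDual ℝ H).symm.continuous.comp (hu.continuous_fderiv one_ne_zero)

theorem HasCompactSupport.gradient (hu : HasCompactSupport u) :
    HasCompactSupport (_root_.gradient u) :=
  hu.fderiv ℝ |>.comp_left (map_zero (InnerProductSpace.toDual ℝ H).symm)

end Gradient

section PartialDerivatives

variable {E : Type*} [NormedAddCommGroup E] [NormedSpace ℝ E] {m : WithTop ℕ∞}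

theorem ContDiff.fderiv_apply_const {g : E → ℝ} (hg : ContDiff ℝ (m + 1) g) (v : E) :
    ContDiff ℝ m fun x => fderiv ℝ g x v :=
  (hg.fderiv_right le_rfl).clm_apply contDiff_const

theorem integrable_mul_fderiv_apply [MeasurableSpace E] [OpensMeasurableSpace E]
    {μ : Measure E} [IsFiniteMeasureOnCompacts μ] {F g : E → ℝ} (hF : Continuous F)
    (hg : ContDiff ℝ 1 g) (hg_supp : HasCompactSupport g) (v : E) :
    Integrable (fun x => F x * fderiv ℝ g x v) μ :=
  (hF.mul ((hg.continuous_fderiv one_ne_zero).clm_apply continuous_const))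
    |>.integrable_of_hasCompactSupport (hg_supp.fderiv_apply ℝ v).mul_left

end PartialDerivatives

section Laplacian

variable {n : ℕ} {F u : EuclideanSpace ℝ (Fin n) → ℝ}

theorem integrable_mul_lap (hF : Continuous F) (hu : ContDiff ℝ 2 u)
    (hu_supp : HasCompactSupport u) : Integrable fun x => F x * lap u x := by
  simp_rw [lap, Finset.mul_sum]
  exact integrable_finsetSum _ fun i _ => integrable_mul_fderiv_apply hF
    (hu.fderiv_apply_const _) (hu_supp.fderiv_apply ℝ _) _

theorem sum_fderiv_single_mul_fderiv_single (x : EuclideanSpace ℝ (Fin n)) :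
    ∑ i, fderiv ℝ F x (EuclideanSpace.single i 1) * fderiv ℝ u x (EuclideanSpace.single i 1)
      = ⟪gradient F x, gradient u x⟫_ℝ := by
  simp_rw [← inner_gradient_left, ← EuclideanSpace.basisFun_apply (Fin n) ℝ,
    real_inner_comm _ (gradient u x)]
  exact (EuclideanSpace.basisFun (Fin n) ℝ).sum_inner_mul_inner _ _

theorem integral_mul_lap_eq_neg_integral_inner_gradient (hF : ContDiff ℝ 1 F)
    (hu : ContDiff ℝ 2 u) (hu_supp : HasCompactSupport u) :
    ∫ x, F x * lap u x = -∫ x, ⟪gradient F x, gradient u x⟫_ℝ := by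
  set e : Fin n → EuclideanSpace ℝ (Fin n) := fun i => EuclideanSpace.single i 1
  set du : Fin n → EuclideanSpace ℝ (Fin n) → ℝ := fun i x => fderiv ℝ u x (e i)
  have hdu : ∀ i, ContDiff ℝ 1 (du i) := fun i => hu.fderiv_apply_const (e i)
  have hdu_supp : ∀ i, HasCompactSupport (du i) := fun i => hu_supp.fderiv_apply ℝ (e i)
  have hdF_du : ∀ i, Integrable fun x => fderiv ℝ F x (e i) * du i x := fun i =>
    (((hF.continuous_fderiv one_ne_zero).clm_apply continuous_const).mul (hdu i).continuous)
      |>.integrable_of_hasCompactSupport (hdu_supp i).mul_left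
  calc ∫ x, F x * lap u x = ∑ i, ∫ x, F x * fderiv ℝ (du i) x (e i) := by
        simp_rw [lap, Finset.mul_sum]
        exact integral_finsetSum _ fun i _ =>
          integrable_mul_fderiv_apply hF.continuous (hdu i) (hdu_supp i) _
    _ = ∑ i, -∫ x, fderiv ℝ F x (e i) * du i x := Finset.sum_congr rfl fun i _ =>
        integral_mul_fderiv_eq_neg_fderiv_mul_of_integrable (hdF_du i)
          (integrable_mul_fderiv_apply hF.continuous (hdu i) (hdu_supp i) _)
          ((hF.continuous.mul (hdu i).continuous).integrable_of_hasCompactSupport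
            (hdu_supp i).mul_left)
          (fun x _ => (hF.differentiable one_ne_zero).differentiableAt)
          (fun x _ => ((hdu i).differentiable one_ne_zero).differentiableAt)
    _ = -∫ x, ⟪gradient F x, gradient u x⟫_ℝ := by
        rw [Finset.sum_neg_distrib, ← integral_finsetSum _ fun i _ => hdF_du i]
        exact congrArg _ (integral_congr_ae (.of_forall sum_fderiv_single_mul_fderiv_single))

end Laplacian

theorem neg_integral_mul_lap_le {n : ℕ} {f : EuclideanSpace ℝ (Fin n) → ℝ → ℝ}
    {u ψ : EuclideanSpace ℝ (Fin n) → ℝ} {β : ℝ}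
    (hf : ContDiff ℝ 1 (fun xs : EuclideanSpace ℝ (Fin n) × ℝ => f xs.1 xs.2))
    (hfs : ∀ x s, deriv (fun r => f x r) s ≤ β)
    (hfx : ∀ x s, ‖gradient (fun y => f y s) x‖ ≤ ψ x) (hψ : Integrable fun x => ψ x ^ 2)
    (hu : ContDiff ℝ 2 u) (hu_supp : HasCompactSupport u) :
    -∫ x, f x (u x) * lap u x ≤ (∫ x, ψ x ^ 2) / 2 + (1 / 2 + β) * ∫ x, ‖gradient u x‖ ^ 2 := by
  have hu1 : ContDiff ℝ 1 u := hu.of_le one_le_two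
  have hF : ContDiff ℝ 1 fun x => f x (u x) := hf.comp (contDiff_id.prodMk hu1)
  have hgrad_sq : Integrable fun x => ‖gradient u x‖ ^ 2 :=
    (hu1.continuous_gradient.norm.pow 2).integrable_of_hasCompactSupport
      (hu_supp.gradient.mono fun x hx hx0 => hx (by simp [hx0]))
  have hinner : Integrable fun x => ⟪gradient (fun y => f y (u y)) x, gradient u x⟫_ℝ :=
    (hF.continuous_gradient.inner hu1.continuous_gradient).integrable_of_hasCompactSupport
      (hu_supp.gradient.mono fun x hx hx0 => hx (by simp [hx0]))
  rw [integral_mul_lap_eq_neg_integral_inner_gradient hF hu hu_supp, neg_neg]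
  calc ∫ x, ⟪gradient (fun y => f y (u y)) x, gradient u x⟫_ℝ
      ≤ ∫ x, (ψ x ^ 2 / 2 + (1 / 2 + β) * ‖gradient u x‖ ^ 2) := by
        refine integral_mono hinner ((hψ.div_const 2).add (hgrad_sq.const_mul _)) fun x => ?_
        rw [gradient_comp_graph (hf.differentiable one_ne_zero _)
          (hu1.differentiable one_ne_zero _)]
        exact real_inner_add_smul_le (hfx x (u x)) (hfs x (u x))
    _ = (∫ x, ψ x ^ 2) / 2 + (1 / 2 + β) * ∫ x, ‖gradient u x‖ ^ 2 := by
        rw [integral_add (hψ.div_const 2) (hgrad_sq.const_mul _), integral_div, integral_const_mul]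

section Growth

variable {X : Type*} [MeasurableSpace X] {μ : Measure X} {p α : ℝ} {F L s ψ : X → ℝ}

theorem MeasureTheory.MemLp.integrable_abs_rpow (hp : 0 < p)
    (hL : MemLp L (ENNReal.ofReal p) μ) : Integrable (fun x => |L x| ^ p) μ := by
  simpa [Real.norm_eq_abs, ENNReal.toReal_ofReal hp.le] using
    hL.integrable_norm_rpow (by simpa using hp) ENNReal.ofReal_ne_top

theorem Continuous.integrable_abs_rpow_of_hasCompactSupport [TopologicalSpace X]
    [OpensMeasurableSpace X] [IsFiniteMeasureOnCompacts μ] (hp : 0 < p) (hL : Continuous L)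
    (hL_supp : HasCompactSupport L) : Integrable (fun x => |L x| ^ p) μ :=
  (hL.abs.rpow_const fun _ => .inr hp.le).integrable_of_hasCompactSupport
    (hL_supp.comp_left (g := fun t => |t| ^ p) (by simp [Real.zero_rpow hp.ne']))

theorem integrable_mul_of_abs_le_rpow_add (hp : 1 ≤ p) (hα : 0 ≤ α)
    (hs : Integrable (fun x => |s x| ^ p) μ) (hLp : Integrable (fun x => |L x| ^ p) μ)
    (hL2 : Integrable (fun x => L x ^ 2) μ) (hψ : Integrable (fun x => ψ x ^ 2) μ)
    (hFs : ∀ x, |F x| ≤ α * |s x| ^ (p - 1) + ψ x) (hF : AEStronglyMeasurable F μ)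
    (hL : AEStronglyMeasurable L μ) : Integrable (fun x => F x * L x) μ :=
  (((hs.add hLp).const_mul α).add ((hψ.div_const 2).add (hL2.div_const 2))).mono' (hF.mul hL)
    (.of_forall fun x => abs_mul_le_of_abs_le_rpow_add hp hα (hFs x))

theorem integral_mul_le_of_abs_le_rpow_add (hp : 1 ≤ p) (hα : 0 ≤ α)
    (hs : Integrable (fun x => |s x| ^ p) μ) (hLp : Integrable (fun x => |L x| ^ p) μ)
    (hL2 : Integrable (fun x => L x ^ 2) μ) (hψ : Integrable (fun x => ψ x ^ 2) μ)
    (hFs : ∀ x, |F x| ≤ α * |s x| ^ (p - 1) + ψ x) (hF : AEStronglyMeasurable F μ)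
    (hL : AEStronglyMeasurable L μ) :
    ∫ x, F x * L x ∂μ ≤ α * ((∫ x, |s x| ^ p ∂μ) + ∫ x, |L x| ^ p ∂μ)
      + ((∫ x, ψ x ^ 2 ∂μ) / 2 + (∫ x, L x ^ 2 ∂μ) / 2) := by
  have hαsLp : Integrable (fun x => α * (|s x| ^ p + |L x| ^ p)) μ := (hs.add hLp).const_mul α
  have hψL2 : Integrable (fun x => ψ x ^ 2 / 2 + L x ^ 2 / 2) μ :=
    (hψ.div_const 2).add (hL2.div_const 2)
  calc ∫ x, F x * L x ∂μ
      ≤ ∫ x, (α * (|s x| ^ p + |L x| ^ p) + (ψ x ^ 2 / 2 + L x ^ 2 / 2)) ∂μ :=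
        integral_mono (integrable_mul_of_abs_le_rpow_add hp hα hs hLp hL2 hψ hFs hF hL)
          (hαsLp.add hψL2)
          fun x => (le_abs_self _).trans (abs_mul_le_of_abs_le_rpow_add hp hα (hFs x))
    _ = _ := by
        rw [integral_add hαsLp hψL2, integral_const_mul, integral_add hs hLp,
          integral_add (hψ.div_const 2) (hL2.div_const 2), integral_div, integral_div]

end Growth

theorem stmt3_general (n : ℕ) (p α₂ β : ℝ) (hp : 2 ≤ p) (hα₂ : 0 < α₂) (hβ : 0 < β)
    (ψ₂ ψ₃ : EuclideanSpace ℝ (Fin n) → ℝ)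
    (hψ₂_mem : MemLp ψ₂ 2 volume)
    (hψ₃_mem : MemLp ψ₃ 2 volume) :
    ∃ c : ℝ, 0 < c ∧
      ∀ (f : EuclideanSpace ℝ (Fin n) → ℝ → ℝ),
        ContDiff ℝ 1 (fun xs : EuclideanSpace ℝ (Fin n) × ℝ => f xs.1 xs.2) →
        (∀ x s, |f x s| ≤ α₂ * |s| ^ (p - 1) + ψ₂ x) →
        (∀ x s, deriv (fun r => f x r) s ≤ β) →
        (∀ x s, ‖gradient (fun y => f y s) x‖ ≤ ψ₃ x) →
        ∀ (u ζ : EuclideanSpace ℝ (Fin n) → ℝ),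
          ContDiff ℝ 2 u → HasCompactSupport u →
          ContDiff ℝ 2 ζ →
          MemLp (lap ζ) 2 volume → MemLp (lap ζ) (ENNReal.ofReal p) volume →
          -(∫ x, f x (u x) * (lap u x - lap ζ x)) ≤
            c * ((∫ x, ‖gradient u x‖ ^ 2) + (∫ x, |u x| ^ p))
              + c * ((∫ x, (lap ζ x) ^ 2) + (∫ x, |lap ζ x| ^ p) + 1) := by
  set K₂ := ∫ x, ψ₂ x ^ 2
  set K₃ := ∫ x, ψ₃ x ^ 2
  have hK₂ : 0 ≤ K₂ := integral_nonneg fun _ => sq_nonneg _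
  have hK₃ : 0 ≤ K₃ := integral_nonneg fun _ => sq_nonneg _
  refine ⟨α₂ + β + 1 + K₂ / 2 + K₃ / 2, by positivity, ?_⟩
  intro f hf hgrowth hfs hfx u ζ hu hu_supp _ hζ2 hζp
  have hp1 : (1 : ℝ) ≤ p := by linarith
  have hF : Continuous fun x => f x (u x) := hf.continuous.comp (continuous_id.prodMk hu.continuous)
  have hup : Integrable fun x => |u x| ^ p :=
    hu.continuous.integrable_abs_rpow_of_hasCompactSupport (by linarith) hu_supp
  have hζp' := hζp.integrable_abs_rpow (by linarith)
  have hfu_lapζ := integrable_mul_of_abs_le_rpow_add hp1 hα₂.le hup hζp' hζ2.integrable_sq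
    hψ₂_mem.integrable_sq (fun x => hgrowth x (u x)) hF.aestronglyMeasurable hζ2.1
  have est_u := neg_integral_mul_lap_le hf hfs hfx hψ₃_mem.integrable_sq hu hu_supp
  have est_ζ := integral_mul_le_of_abs_le_rpow_add hp1 hα₂.le hup hζp' hζ2.integrable_sq
    hψ₂_mem.integrable_sq (fun x => hgrowth x (u x)) hF.aestronglyMeasurable hζ2.1
  simp_rw [mul_sub]
  rw [integral_sub (integrable_mul_lap hF hu hu_supp) hfu_lapζ]
  have hA : 0 ≤ ∫ x, ‖gradient u x‖ ^ 2 := integral_nonneg fun _ => sq_nonneg _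
  have hB : 0 ≤ ∫ x, |u x| ^ p := integral_nonneg fun _ => by positivity
  have hC : 0 ≤ ∫ x, lap ζ x ^ 2 := integral_nonneg fun _ => sq_nonneg _
  have hD : 0 ≤ ∫ x, |lap ζ x| ^ p := integral_nonneg fun _ => by positivity
  linarith [mul_nonneg (by positivity : 0 ≤ α₂ + 1 / 2 + K₂ / 2 + K₃ / 2) hA,
    mul_nonneg (by positivity : 0 ≤ β + 1 + K₂ / 2 + K₃ / 2) hB,
    mul_nonneg (by positivity : 0 ≤ α₂ + β + 1 / 2 + K₂ / 2 + K₃ / 2) hC,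
    mul_nonneg (by positivity : 0 ≤ β + 1 + K₂ / 2 + K₃ / 2) hD]

/-- Estimate of the nonlinear term against the Laplacian: under the growth
and gradient conditions on `f`, there is `c > 0` depending only on `α₂, β, p, ‖ψ₂‖₂, ‖ψ₃‖₂`
such that for all compactly supported `u ∈ C²` and all `ζ ∈ C²` with `Δζ ∈ L² ∩ L^p`,
`−∫ f(x,u)(Δu − Δζ) ≤ c(‖∇u‖₂² + ‖u‖_p^p) + c(‖Δζ‖₂² + ‖Δζ‖_p^p + 1)`. -/
theorem stmt3 (n : ℕ) (p α₂ β : ℝ) (hp : 2 ≤ p) (hα₂ : 0 < α₂) (hβ : 0 < β)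
    (ψ₂ ψ₃ : EuclideanSpace ℝ (Fin n) → ℝ)
    (hψ₂_mem : MemLp ψ₂ 2 volume) (hψ₂_nonneg : ∀ x, 0 ≤ ψ₂ x)
    (hψ₃_mem : MemLp ψ₃ 2 volume) :
    ∃ c : ℝ, 0 < c ∧
      ∀ (f : EuclideanSpace ℝ (Fin n) → ℝ → ℝ),
        ContDiff ℝ 1 (fun xs : EuclideanSpace ℝ (Fin n) × ℝ => f xs.1 xs.2) →
        (∀ x s, |f x s| ≤ α₂ * |s| ^ (p - 1) + ψ₂ x) →
        (∀ x s, deriv (fun r => f x r) s ≤ β) →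
        (∀ x s, ‖gradient (fun y => f y s) x‖ ≤ ψ₃ x) →
        ∀ (u ζ : EuclideanSpace ℝ (Fin n) → ℝ),
          ContDiff ℝ 2 u → HasCompactSupport u →
          ContDiff ℝ 2 ζ →
          MemLp (lap ζ) 2 volume → MemLp (lap ζ) (ENNReal.ofReal p) volume →
          -(∫ x, f x (u x) * (lap u x - lap ζ x)) ≤
            c * ((∫ x, ‖gradient u x‖ ^ 2) + (∫ x, |u x| ^ p))
              + c * ((∫ x, (lap ζ x) ^ 2) + (∫ x, |lap ζ x| ^ p) + 1) :=
  stmt3_general n p α₂ β hp hα₂ hβ ψ₂ ψ₃ hψ₂_mem hψ₃_mem
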